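/- The zero function is the unique fixed point of B in W; that is, B(0) = 0 and every ψ ∈ W with Bψ = ψ satisfies ψ(x) = 0 for all x ∈ [ε,∞). -/

import Mathlib

open Real Set MeasureTheory

/-- The nonlinear integral operator `B`. -/
noncomputable def opB (lam ε : ℝ) (ψ : ℝ → ℝ) (x : ℝ) : ℝ :=
  (lam / 2) * Real.sqrt (x + ε) *
    ∫ y in Set.Ioi ε, (1 / (y + x + |y - x|)) * (y / Real.sqrt (y + ε)) *
      (ψ y / (y + (ψ y) ^ 2 / (y + ε)))

/-- Membership in `W`: bounded, continuous and nonnegative on `[ε,∞)`. -/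
def memW (ε : ℝ) (ψ : ℝ → ℝ) : Prop :=
  ContinuousOn ψ (Set.Ici ε) ∧ (∃ M : ℝ, ∀ x ∈ Set.Ici ε, |ψ x| ≤ M) ∧
    ∀ x ∈ Set.Ici ε, 0 ≤ ψ x

/-! If `0 ≤ ψ ≤ M` on `(ε, ∞)` then `Bψ ≤ λ M`. Indeed the last factor of the integrand is at
most `M / y` and `y + x + |y - x| = 2 max x y`, so
`Bψ x ≤ (λ M / 4) √(x+ε) ∫ dy / (max x y √(y+ε))`. Splitting this integral at `y = x` and using
`1 / y ≤ (x+ε) / (x (y+ε))` on the tail, it is at most `4 / √(x+ε)`. A fixed point therefore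
satisfies `sup ψ ≤ λ sup ψ`, and `λ < 1` forces `sup ψ = 0`. -/

open Filter Topology

lemma add_add_abs_sub_eq_two_mul_max (x y : ℝ) : y + x + |y - x| = 2 * max x y := by
  rw [add_comm y x, ← two_nsmul_sup_eq_add_add_abs_sub, two_nsmul, two_mul]

section ShiftedSqrt

variable {a b c : ℝ}

lemma hasDerivAt_sqrt_add {y : ℝ} (hy : 0 < y + c) :
    HasDerivAt (fun z => √(z + c)) (1 / (2 * √(y + c))) y :=
  ((hasDerivAt_id y).add_const c).sqrt hy.ne'

lemma integral_inv_sqrt_add (hab : a ≤ b) (hac : 0 < a + c) :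
    ∫ y in a..b, (√(y + c))⁻¹ = 2 * (√(b + c) - √(a + c)) := by
  have hpos : ∀ y ∈ uIcc a b, 0 < y + c := by
    rw [uIcc_of_le hab]; exact fun y hy => by linarith [hy.1]
  rw [intervalIntegral.integral_eq_sub_of_hasDerivAt (f := fun z => 2 * √(z + c))]
  · ring
  · intro y hy
    refine ((hasDerivAt_sqrt_add (hpos y hy)).const_mul 2).congr_deriv ?_
    ring
  · exact ContinuousOn.intervalIntegrable fun y hy =>
      ((continuous_sqrt.comp (continuous_add_const c)).continuousAt.inv₀
        (sqrt_pos.2 (hpos y hy)).ne').continuousWithinAt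

lemma hasDerivAt_neg_two_mul_inv_sqrt_add {y : ℝ} (hy : 0 < y + c) :
    HasDerivAt (fun z => -2 * (√(z + c))⁻¹) ((y + c) * √(y + c))⁻¹ y := by
  have hs : 0 < √(y + c) := sqrt_pos.2 hy
  refine (((hasDerivAt_sqrt_add hy).inv hs.ne').const_mul (-2)).congr_deriv ?_
  rw [sq_sqrt hy.le]
  field_simp

lemma tendsto_neg_two_mul_inv_sqrt_add :
    Tendsto (fun z => -2 * (√(z + c))⁻¹) atTop (𝓝 0) := by
  simpa using (tendsto_sqrt_atTop.comp (tendsto_atTop_add_const_right _ c tendsto_id)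
    ).inv_tendsto_atTop.const_mul (-2)

lemma integrableOn_Ioi_inv_mul_sqrt_add (hac : 0 < a + c) :
    IntegrableOn (fun y => ((y + c) * √(y + c))⁻¹) (Ioi a) :=
  integrableOn_Ioi_deriv_of_nonneg'
    (fun y hy => hasDerivAt_neg_two_mul_inv_sqrt_add (by linarith [mem_Ici.1 hy]))
    (fun y hy => inv_nonneg.2 (mul_nonneg (by linarith [mem_Ioi.1 hy]) (sqrt_nonneg _)))
    tendsto_neg_two_mul_inv_sqrt_add

lemma integral_Ioi_inv_mul_sqrt_add (hac : 0 < a + c) :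
    ∫ y in Ioi a, ((y + c) * √(y + c))⁻¹ = 2 / √(a + c) := by
  rw [integral_Ioi_of_hasDerivAt_of_nonneg'
    (fun y hy => hasDerivAt_neg_two_mul_inv_sqrt_add (by linarith [mem_Ici.1 hy]))
    (fun y hy => inv_nonneg.2 (mul_nonneg (by linarith [mem_Ioi.1 hy]) (sqrt_nonneg _)))
    tendsto_neg_two_mul_inv_sqrt_add]
  ring

end ShiftedSqrt

section Kernel

variable {ε x : ℝ}

lemma inv_max_mul_sqrt_le {y : ℝ} (hε : 0 ≤ ε) (hx : 0 < x) (hy : 0 < y + ε) :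
    (max x y * √(y + ε))⁻¹ ≤ (x + ε) / x * ((y + ε) * √(y + ε))⁻¹ := by
  have hs : 0 < √(y + ε) := sqrt_pos.2 hy
  have hm : x * (y + ε) / (x + ε) ≤ max x y := by
    rw [div_le_iff₀ (by linarith)]
    nlinarith [mul_le_mul_of_nonneg_left (le_max_right x y) hx.le,
      mul_le_mul_of_nonneg_right (le_max_left x y) hε]
  calc (max x y * √(y + ε))⁻¹ ≤ (x * (y + ε) / (x + ε) * √(y + ε))⁻¹ := by
        gcongr
    _ = (x + ε) / x * ((y + ε) * √(y + ε))⁻¹ := by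
        field_simp

lemma integrableOn_Ioi_inv_max_mul_sqrt (hε : 0 < ε) (hx : ε ≤ x) :
    IntegrableOn (fun y => (max x y * √(y + ε))⁻¹) (Ioi ε) := by
  refine ((integrableOn_Ioi_inv_mul_sqrt_add (a := ε) (c := ε) (by linarith)).const_mul
    ((x + ε) / x)).mono' (by fun_prop) ?_
  rw [ae_restrict_iff' measurableSet_Ioi]
  refine ae_of_all _ fun y (hy : ε < y) => ?_
  rw [norm_of_nonneg
    (inv_nonneg.2 (mul_nonneg (le_max_of_le_right (by linarith)) (sqrt_nonneg _)))]
  exact inv_max_mul_sqrt_le hε.le (by linarith) (by linarith)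

lemma sqrt_mul_integral_Ioi_inv_max_mul_sqrt_le (hε : 0 < ε) (hx : ε ≤ x) :
    √(x + ε) * ∫ y in Ioi ε, (max x y * √(y + ε))⁻¹ ≤ 4 := by
  have hx0 : 0 < x := by linarith
  have hint := integrableOn_Ioi_inv_max_mul_sqrt hε hx
  have head : ∫ y in Ioc ε x, (max x y * √(y + ε))⁻¹ = x⁻¹ * (2 * (√(x + ε) - √(ε + ε))) := by
    rw [setIntegral_congr_fun measurableSet_Ioc (g := fun y => x⁻¹ * (√(y + ε))⁻¹)
      fun y hy => by simp only [max_eq_left hy.2, mul_inv], integral_const_mul,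
      ← intervalIntegral.integral_of_le hx, integral_inv_sqrt_add hx (by linarith)]
  have tail : ∫ y in Ioi x, (max x y * √(y + ε))⁻¹ ≤ (x + ε) / x * (2 / √(x + ε)) := by
    rw [← integral_Ioi_inv_mul_sqrt_add (by linarith), ← integral_const_mul]
    refine setIntegral_mono_on (hint.mono_set (Ioi_subset_Ioi hx))
      ((integrableOn_Ioi_inv_mul_sqrt_add (by linarith)).const_mul _) measurableSet_Ioi
      fun y (hy : x < y) => inv_max_mul_sqrt_le hε.le hx0 (by linarith)
  rw [← Ioc_union_Ioi_eq_Ioi hx, setIntegral_union Ioc_disjoint_Ioi_same measurableSet_Ioi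
    (hint.mono_set Ioc_subset_Ioi_self) (hint.mono_set (Ioi_subset_Ioi hx)), head]
  have hts : √(ε + ε) ≤ √(x + ε) := sqrt_le_sqrt (by linarith)
  have hs : 0 < √(x + ε) := sqrt_pos.2 (by linarith)
  have hs2 : √(x + ε) ^ 2 = x + ε := sq_sqrt (by linarith)
  calc _ ≤ √(x + ε) * (x⁻¹ * (2 * (√(x + ε) - √(ε + ε))) + (x + ε) / x * (2 / √(x + ε))) := by
        gcongr
    _ = (4 * (x + ε) - 2 * √(x + ε) * √(ε + ε)) / x := by
        field_simp
        linear_combination 2 * hs2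
    _ ≤ 4 := by
        rw [div_le_iff₀ hx0]
        nlinarith [mul_le_mul_of_nonneg_right hts (sqrt_nonneg (ε + ε)),
          mul_self_sqrt (by linarith : (0 : ℝ) ≤ ε + ε)]

end Kernel

lemma opB_integrand_nonneg {ε x y p : ℝ} (hε : 0 ≤ ε) (hx : 0 ≤ x) (hy : 0 < y) (hp : 0 ≤ p) :
    0 ≤ 1 / (y + x + |y - x|) * (y / √(y + ε)) * (p / (y + p ^ 2 / (y + ε))) := by
  positivity

lemma opB_integrand_le {ε x y p M : ℝ} (hε : 0 ≤ ε) (hy : 0 < y) (hp : 0 ≤ p) (hpM : p ≤ M) :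
    1 / (y + x + |y - x|) * (y / √(y + ε)) * (p / (y + p ^ 2 / (y + ε))) ≤
      M / 2 * (max x y * √(y + ε))⁻¹ := by
  have hm : 0 < max x y := lt_max_of_lt_right hy
  have hs : 0 < √(y + ε) := sqrt_pos.2 (by positivity)
  calc _ ≤ 1 / (2 * max x y) * (y / √(y + ε)) * (M / y) := by
        rw [add_add_abs_sub_eq_two_mul_max]
        gcongr
        · exact hp.trans hpM
        · exact le_add_of_nonneg_right (by positivity)
    _ = M / 2 * (max x y * √(y + ε))⁻¹ := by
        field_simp

lemma opB_le_mul {lam ε x M : ℝ} {ψ : ℝ → ℝ} (hlam : 0 ≤ lam) (hε : 0 < ε) (hx : ε ≤ x)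
    (hψ0 : ∀ y ∈ Ioi ε, 0 ≤ ψ y) (hψM : ∀ y ∈ Ioi ε, ψ y ≤ M) :
    opB lam ε ψ x ≤ lam * M := by
  have hM : 0 ≤ M := (hψ0 (ε + 1) (by simp)).trans (hψM (ε + 1) (by simp))
  have hint : ∫ y in Ioi ε, 1 / (y + x + |y - x|) * (y / √(y + ε)) *
      (ψ y / (y + ψ y ^ 2 / (y + ε))) ≤ ∫ y in Ioi ε, M / 2 * (max x y * √(y + ε))⁻¹ := by
    refine integral_mono_of_nonneg ?_ ((integrableOn_Ioi_inv_max_mul_sqrt hε hx).const_mul _) ?_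
      <;> rw [EventuallyLE, ae_restrict_iff' measurableSet_Ioi]
      <;> refine ae_of_all _ fun y (hy : ε < y) => ?_
    · exact opB_integrand_nonneg hε.le (by linarith) (by linarith) (hψ0 y hy)
    · exact opB_integrand_le hε.le (by linarith) (hψ0 y hy) (hψM y hy)
  calc opB lam ε ψ x ≤ lam / 2 * √(x + ε) * ∫ y in Ioi ε, M / 2 * (max x y * √(y + ε))⁻¹ :=
        mul_le_mul_of_nonneg_left hint (by positivity)
    _ = lam * M / 4 * (√(x + ε) * ∫ y in Ioi ε, (max x y * √(y + ε))⁻¹) := by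
        rw [integral_const_mul]; ring
    _ ≤ lam * M / 4 * 4 := by
        gcongr
        exact sqrt_mul_integral_Ioi_inv_max_mul_sqrt_le hε hx
    _ = lam * M := by ring

theorem stmt_19 (ε lam : ℝ) (hε : 0 < ε) (hlam0 : 0 < lam) (hlam1 : lam < 1) :
    (∀ x ∈ Set.Ici ε, opB lam ε (fun _ => 0) x = 0) ∧
      ∀ ψ : ℝ → ℝ, memW ε ψ →
        (∀ x ∈ Set.Ici ε, opB lam ε ψ x = ψ x) →
        ∀ x ∈ Set.Ici ε, ψ x = 0 := by
  refine ⟨fun x _ => by simp [opB], ?_⟩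
  rintro ψ ⟨-, ⟨M₀, hM₀⟩, hψ0⟩ hfix x hx
  have hbdd : BddAbove (ψ '' Ici ε) :=
    ⟨M₀, forall_mem_image.2 fun y hy => (le_abs_self _).trans (hM₀ y hy)⟩
  set M := sSup (ψ '' Ici ε)
  have hψM : ∀ y ∈ Ici ε, ψ y ≤ M := fun y hy => le_csSup hbdd (mem_image_of_mem ψ hy)
  have hM_le : M ≤ lam * M := by
    refine csSup_le (image_nonempty.2 nonempty_Ici) (forall_mem_image.2 fun y hy => ?_)
    rw [← hfix y hy]
    exact opB_le_mul hlam0.le hε hy (fun z hz => hψ0 z (mem_Ici_of_Ioi hz))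
      (fun z hz => hψM z (mem_Ici_of_Ioi hz))
  have hM : M ≤ 0 := by nlinarith [hψ0 x hx, hψM x hx]
  linarith [hψ0 x hx, hψM x hx]
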